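/- For a connected graph G and any vertex q, the quantity γ(G) = (1/4)·Σ_{e∈E}(r(e⁺,q) − r(e⁻,q))² is independent of the choice of base vertex q, and equals (1/2)·μᵀRμ where μ is the curvature vector and R the resistance matrix. -/

import Mathlib

open scoped Classical
open Matrix

/-- A finite multigraph without loop edges, given by endpoint maps on an edge type. -/
structure Multigraph where
  V : Type
  E : Type
  [fintV : Fintype V]
  [fintE : Fintype E]
  fst : E → V
  snd : E → V
  no_loop : ∀ e, fst e ≠ snd e

namespace Multigraph

variable (G : Multigraph)

instance : Fintype G.V := G.fintV
instance : Fintype G.E := G.fintE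

/-- One step along an edge of the subgraph with edge set `S`. -/
def step (S : Finset G.E) (u v : G.V) : Prop :=
  ∃ e ∈ S, (G.fst e = u ∧ G.snd e = v) ∨ (G.fst e = v ∧ G.snd e = u)

/-- Two vertices are in the same component of the spanning subgraph with edge set `S`. -/
def reach (S : Finset G.E) : G.V → G.V → Prop :=
  Relation.EqvGen (G.step S)

/-- Number of connected components of the spanning subgraph with edge set `S`. -/
noncomputable def ncomp (S : Finset G.E) : ℕ :=
  Nat.card (Quotient (Relation.EqvGen.setoid (G.step S)))

/-- The graph is connected. -/
def IsConnected : Prop := G.ncomp Finset.univ = 1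

/-- `S` is the edge set of a spanning tree. -/
def IsSpanningTree (S : Finset G.E) : Prop :=
  G.ncomp S = 1 ∧ S.card + 1 = Fintype.card G.V

/-- `S` is the edge set of a two-component spanning forest. -/
def IsTwoForest (S : Finset G.E) : Prop :=
  G.ncomp S = 2 ∧ S.card + 2 = Fintype.card G.V

/-- `S` is the edge set of a three-component spanning forest. -/
def IsThreeForest (S : Finset G.E) : Prop :=
  G.ncomp S = 3 ∧ S.card + 3 = Fintype.card G.V

/-- κ(G): number of spanning trees. -/
noncomputable def kappa : ℕ := Nat.card {S : Finset G.E // G.IsSpanningTree S}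

/-- κ₂(G): number of two-component spanning forests. -/
noncomputable def kappa2 : ℕ := Nat.card {S : Finset G.E // G.IsTwoForest S}

/-- κ₂(x|y): number of two-forests with `x` and `y` in different components. -/
noncomputable def kappa2Sep (x y : G.V) : ℕ :=
  Nat.card {S : Finset G.E // G.IsTwoForest S ∧ ¬ G.reach S x y}

/-- κ₂(xy|q): number of two-forests with `x`, `y` in one component, `q` in the other. -/
noncomputable def kappa2Tog (x y q : G.V) : ℕ :=
  Nat.card {S : Finset G.E // G.IsTwoForest S ∧ G.reach S x y ∧ ¬ G.reach S x q}

/-- κ₃(x|y|q): number of three-forests with `x`, `y`, `q` in pairwise distinct components. -/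
noncomputable def kappa3Sep (x y q : G.V) : ℕ :=
  Nat.card {S : Finset G.E //
    G.IsThreeForest S ∧ ¬ G.reach S x y ∧ ¬ G.reach S x q ∧ ¬ G.reach S y q}

/-- Effective resistance: r(x,y) = κ₂(x|y)/κ(G). -/
noncomputable def res (x y : G.V) : ℝ := (G.kappa2Sep x y : ℝ) / (G.kappa : ℝ)

/-- Potential kernel: j_q(x,y) = κ₂(xy|q)/κ(G). -/
noncomputable def jfun (q x y : G.V) : ℝ := (G.kappa2Tog x y q : ℝ) / (G.kappa : ℝ)

/-- Cut size |∂F| of a two-forest with edge set `S`: edges joining the two components. -/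
noncomputable def cutSize (S : Finset G.E) : ℕ :=
  Nat.card {e : G.E // ¬ G.reach S (G.fst e) (G.snd e)}

/-- The curvature vector μ. -/
noncomputable def mu (x : G.V) : ℝ :=
  1 - (1/2) * ∑ e : G.E,
    (if G.fst e = x ∨ G.snd e = x then G.res (G.fst e) (G.snd e) else 0)

/-- The Laplacian matrix of `G`. -/
noncomputable def lap : Matrix G.V G.V ℝ := fun v w =>
  (if v = w then (Nat.card {e : G.E // G.fst e = v ∨ G.snd e = v} : ℝ) else 0)
    - (Nat.card {e : G.E // (G.fst e = v ∧ G.snd e = w) ∨ (G.fst e = w ∧ G.snd e = v)} : ℝ)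

/-- The effective resistance matrix of `G`. -/
noncomputable def resMatrix : Matrix G.V G.V ℝ := fun v w => G.res v w

end Multigraph

/-- γ(G) computed with base vertex `q`. -/
noncomputable def Multigraph.gammaAt (G : Multigraph) (q : G.V) : ℝ :=
  (1/4) * ∑ e : G.E, (G.res (G.fst e) q - G.res (G.snd e) q) ^ 2

namespace Multigraph

variable {G : Multigraph}

lemma reach_refl (S : Finset G.E) (a : G.V) : G.reach S a a := Relation.EqvGen.refl a

lemma reach_symm {S : Finset G.E} {a b : G.V} (h : G.reach S a b) : G.reach S b a :=
  Relation.EqvGen.symm a b h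

lemma reach_trans {S : Finset G.E} {a b c : G.V} (h : G.reach S a b) (h' : G.reach S b c) :
    G.reach S a c := Relation.EqvGen.trans a b c h h'

lemma step_of_mem {S : Finset G.E} {e : G.E} (he : e ∈ S) :
    G.step S (G.fst e) (G.snd e) := ⟨e, he, Or.inl ⟨rfl, rfl⟩⟩

lemma reach_of_mem {S : Finset G.E} {e : G.E} (he : e ∈ S) :
    G.reach S (G.fst e) (G.snd e) := Relation.EqvGen.rel _ _ (step_of_mem he)

lemma step_mono {S S' : Finset G.E} (h : S ⊆ S') {a b : G.V} (hs : G.step S a b) :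
    G.step S' a b := by obtain ⟨e, he, hh⟩ := hs; exact ⟨e, h he, hh⟩

lemma reach_mono {S S' : Finset G.E} (h : S ⊆ S') {a b : G.V} (hr : G.reach S a b) :
    G.reach S' a b := Relation.EqvGen.mono (r := G.step S) (p := G.step S') (fun a b hs => step_mono h hs) _ _ hr

/-- Characterization of reachability after inserting one edge. -/
lemma reach_insert_iff {S : Finset G.E} {e : G.E} {u v : G.V} :
    G.reach (insert e S) u v ↔ G.reach S u v ∨
      (G.reach S u (G.fst e) ∧ G.reach S (G.snd e) v) ∨
      (G.reach S u (G.snd e) ∧ G.reach S (G.fst e) v) := by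
  constructor
  · intro h
    induction h with
    | rel a b hab =>
      obtain ⟨f, hf, hor⟩ := hab
      rcases Finset.mem_insert.1 hf with rfl | hfS
      · rcases hor with ⟨h1, h2⟩ | ⟨h1, h2⟩
        · exact Or.inr (Or.inl ⟨by rw [h1]; exact reach_refl _ _, by rw [h2]; exact reach_refl _ _⟩)
        · exact Or.inr (Or.inr ⟨by rw [h2]; exact reach_refl _ _, by rw [h1]; exact reach_refl _ _⟩)
      · exact Or.inl (Relation.EqvGen.rel _ _ ⟨f, hfS, hor⟩)
    | refl a => exact Or.inl (reach_refl _ _)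
    | symm a b _ ih =>
      rcases ih with h | ⟨h1, h2⟩ | ⟨h1, h2⟩
      · exact Or.inl (reach_symm h)
      · exact Or.inr (Or.inr ⟨reach_symm h2, reach_symm h1⟩)
      · exact Or.inr (Or.inl ⟨reach_symm h2, reach_symm h1⟩)
    | trans a b c _ _ ih1 ih2 =>
      rcases ih1 with h | ⟨h1, h2⟩ | ⟨h1, h2⟩
      · rcases ih2 with h' | ⟨h1', h2'⟩ | ⟨h1', h2'⟩
        · exact Or.inl (reach_trans h h')
        · exact Or.inr (Or.inl ⟨reach_trans h h1', h2'⟩)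
        · exact Or.inr (Or.inr ⟨reach_trans h h1', h2'⟩)
      · rcases ih2 with h' | ⟨h1', h2'⟩ | ⟨h1', h2'⟩
        · exact Or.inr (Or.inl ⟨h1, reach_trans h2 h'⟩)
        · exact Or.inr (Or.inl ⟨h1, h2'⟩)
        · exact Or.inl (reach_trans h1 h2')
      · rcases ih2 with h' | ⟨h1', h2'⟩ | ⟨h1', h2'⟩
        · exact Or.inr (Or.inr ⟨h1, reach_trans h2 h'⟩)
        · exact Or.inl (reach_trans h1 h2')
        · exact Or.inr (Or.inr ⟨h1, h2'⟩)
  · intro h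
    have hsub : S ⊆ insert e S := Finset.subset_insert _ _
    have hre : G.reach (insert e S) (G.fst e) (G.snd e) :=
      reach_of_mem (Finset.mem_insert_self _ _)
    rcases h with h | ⟨h1, h2⟩ | ⟨h1, h2⟩
    · exact reach_mono hsub h
    · exact reach_trans (reach_mono hsub h1) (reach_trans hre (reach_mono hsub h2))
    · exact reach_trans (reach_mono hsub h1) (reach_trans (reach_symm hre) (reach_mono hsub h2))

end Multigraph

namespace Multigraph
variable {G : Multigraph}

/-- The component of `v` in the subgraph `S`. -/
def comp (S : Finset G.E) (v : G.V) : Quotient (Relation.EqvGen.setoid (G.step S)) :=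
  Quotient.mk _ v

lemma comp_eq_iff {S : Finset G.E} {a b : G.V} :
    comp S a = comp S b ↔ G.reach S a b := by
  constructor
  · intro h; exact Quotient.exact h
  · intro h; exact Quotient.sound h

lemma comp_surjective (S : Finset G.E) :
    Function.Surjective (comp S : G.V → _) := by
  intro c; obtain ⟨v, rfl⟩ := Quotient.exists_rep c; exact ⟨v, rfl⟩

lemma ncomp_eq_one_iff {S : Finset G.E} [Nonempty G.V] :
    G.ncomp S = 1 ↔ ∀ a b, G.reach S a b := by
  rw [ncomp, Nat.card_eq_one_iff_unique]
  constructor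
  · rintro ⟨hs, _⟩ a b
    exact comp_eq_iff.1 (@Subsingleton.elim _ hs _ _)
  · intro h
    refine ⟨⟨fun c d => ?_⟩, ⟨comp S Classical.ofNonempty⟩⟩
    obtain ⟨a, rfl⟩ := comp_surjective S c
    obtain ⟨b, rfl⟩ := comp_surjective S d
    exact comp_eq_iff.2 (h a b)

/-- In a two-component forest separating `x` and `q`, every vertex reaches `x` or `q`. -/
lemma reach_or_of_ncomp_two {S : Finset G.E} {x q : G.V} (h2 : G.ncomp S = 2)
    (hxq : ¬ G.reach S x q) (c : G.V) : G.reach S c x ∨ G.reach S c q := by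
  obtain ⟨a, b, hab, huniv⟩ := Nat.card_eq_two_iff.1 h2
  have hx : comp S x ∈ ({a, b} : Set _) := huniv ▸ Set.mem_univ _
  have hq : comp S q ∈ ({a, b} : Set _) := huniv ▸ Set.mem_univ _
  have hc : comp S c ∈ ({a, b} : Set _) := huniv ▸ Set.mem_univ _
  simp only [Set.mem_insert_iff, Set.mem_singleton_iff] at hx hq hc
  have hne : comp S x ≠ comp S q := fun h => hxq (comp_eq_iff.1 h)
  rcases hc with hc | hc
  · rcases hx with hx | hx
    · exact Or.inl (comp_eq_iff.1 (hc.trans hx.symm))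
    · rcases hq with hq | hq
      · exact Or.inr (comp_eq_iff.1 (hc.trans hq.symm))
      · exact absurd (hx.trans hq.symm) hne
  · rcases hx with hx | hx
    · rcases hq with hq | hq
      · exact absurd (hx.trans hq.symm) hne
      · exact Or.inr (comp_eq_iff.1 (hc.trans hq.symm))
    · exact Or.inl (comp_eq_iff.1 (hc.trans hx.symm))

lemma ncomp_le_insert_add_one (S : Finset G.E) (e : G.E) :
    G.ncomp S ≤ G.ncomp (insert e S) + 1 := by
  classical
  set f : Quotient (Relation.EqvGen.setoid (G.step S)) →
      Quotient (Relation.EqvGen.setoid (G.step (insert e S))) :=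
    Quotient.map' id (fun a b h => reach_mono (Finset.subset_insert e S) h) with hf
  have hfc : ∀ v, f (comp S v) = comp (insert e S) v := fun v => rfl
  set g : Quotient (Relation.EqvGen.setoid (G.step S)) →
      Option (Quotient (Relation.EqvGen.setoid (G.step (insert e S)))) :=
    fun c => if c = comp S (G.fst e) then none else some (f c) with hg
  have hginj : Function.Injective g := by
    intro c d hcd
    obtain ⟨u, rfl⟩ := comp_surjective S c
    obtain ⟨v, rfl⟩ := comp_surjective S d
    by_cases hu : comp S u = comp S (G.fst e) <;> by_cases hv : comp S v = comp S (G.fst e)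
    · exact hu.trans hv.symm
    · simp [hg, hu, hv] at hcd
    · simp [hg, hu, hv] at hcd
    · simp only [hg, hu, hv, if_false, if_neg, Option.some.injEq] at hcd
      have := comp_eq_iff.1 (show comp (insert e S) u = comp (insert e S) v from hcd)
      rcases reach_insert_iff.1 this with h | ⟨h1, _⟩ | ⟨_, h2⟩
      · exact comp_eq_iff.2 h
      · exact absurd (comp_eq_iff.2 h1) hu
      · exact absurd (comp_eq_iff.2 (reach_symm h2)) (fun h => hv h)
  calc G.ncomp S ≤ Nat.card (Option (Quotient (Relation.EqvGen.setoid (G.step (insert e S))))) :=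
        Nat.card_le_card_of_injective g hginj
    _ = G.ncomp (insert e S) + 1 := by simp [Nat.card_eq_fintype_card, ncomp]

lemma card_add_ncomp_ge (S : Finset G.E) :
    Fintype.card G.V ≤ G.ncomp S + S.card := by
  classical
  induction S using Finset.induction with
  | empty =>
    have : ∀ a b : G.V, G.reach ∅ a b → a = b := by
      intro a b h
      induction h with
      | rel a b hab => obtain ⟨e, he, _⟩ := hab; exact absurd he (Finset.notMem_empty e)
      | refl a => rfl
      | symm _ _ _ ih => exact ih.symm
      | trans _ _ _ _ _ ih1 ih2 => exact ih1.trans ih2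
    have hinj : Function.Injective (comp (∅ : Finset G.E) : G.V → _) := by
      intro a b h; exact this a b (comp_eq_iff.1 h)
    have := Nat.card_le_card_of_injective _ hinj
    simpa [ncomp, Nat.card_eq_fintype_card] using this
  | @insert e S he ih =>
    have h1 := ncomp_le_insert_add_one (G := G) S e
    rw [Finset.card_insert_of_notMem he]
    omega

end Multigraph

namespace Multigraph
variable {G : Multigraph}

/-- The endpoint of `e` other than `x`. -/
noncomputable def other (e : G.E) (x : G.V) : G.V := if G.fst e = x then G.snd e else G.fst e

/-- `e` is incident to `x`. -/
def inc (e : G.E) (x : G.V) : Prop := G.fst e = x ∨ G.snd e = x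

lemma other_spec {e : G.E} {x : G.V} (h : inc e x) :
    (G.fst e = x ∧ G.snd e = other e x) ∨ (G.fst e = other e x ∧ G.snd e = x) := by
  unfold other
  rcases h with h | h
  · rw [if_pos h]; exact Or.inl ⟨h, rfl⟩
  · rw [if_neg (fun hf => G.no_loop e (hf.trans h.symm))]; exact Or.inr ⟨rfl, h⟩

lemma other_ne {e : G.E} {x : G.V} (h : inc e x) : other e x ≠ x := by
  rcases other_spec h with ⟨h1, h2⟩ | ⟨h1, h2⟩
  · intro hh; exact G.no_loop e (by rw [h1, ← hh, h2])
  · intro hh; exact G.no_loop e (by rw [h1, hh, ← h2])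

lemma step_other {S : Finset G.E} {e : G.E} {x : G.V} (he : e ∈ S) (h : inc e x) :
    G.step S x (other e x) := by
  rcases other_spec h with ⟨h1, h2⟩ | ⟨h1, h2⟩
  · exact ⟨e, he, Or.inl ⟨h1, h2⟩⟩
  · exact ⟨e, he, Or.inr ⟨h1, h2⟩⟩

lemma reach_insert_iff' {S : Finset G.E} {e : G.E} {x u v : G.V} (h : inc e x) :
    G.reach (insert e S) u v ↔ G.reach S u v ∨
      (G.reach S u x ∧ G.reach S (other e x) v) ∨
      (G.reach S u (other e x) ∧ G.reach S x v) := by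
  rcases other_spec h with ⟨h1, h2⟩ | ⟨h1, h2⟩
  · rw [reach_insert_iff, h1, h2]
  · rw [reach_insert_iff, h1, h2]
    tauto

lemma step_symm {S : Finset G.E} {u v : G.V} (h : G.step S u v) : G.step S v u := by
  obtain ⟨e, he, hh⟩ := h; exact ⟨e, he, hh.symm⟩

lemma reach_iff_rtg {S : Finset G.E} {a b : G.V} :
    G.reach S a b ↔ Relation.ReflTransGen (G.step S) a b := by
  constructor
  · intro h
    have hequiv : Equivalence (Relation.ReflTransGen (G.step S)) :=
      ⟨fun _ => Relation.ReflTransGen.refl,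
       fun h => (@Relation.ReflTransGen.stdSymm _ _ ⟨fun _ _ hs => step_symm hs⟩).symm _ _ h,
       fun h h' => Relation.ReflTransGen.trans h h'⟩
    exact (Equivalence.eqvGen_iff hequiv).1
      (Relation.EqvGen.mono (r := G.step S) (p := Relation.ReflTransGen (G.step S)) (fun u v hs => Relation.ReflTransGen.single hs) _ _ h)
  · intro h
    induction h with
    | refl => exact reach_refl _ _
    | tail _ hs ih => exact reach_trans ih (Relation.EqvGen.rel _ _ hs)

/-- From `x ≠ q` and `x` connected to `q`, there is an edge at `x` whose removal
still leaves its other endpoint connected to `q`. -/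
lemma exists_exit_edge : ∀ S : Finset G.E, ∀ x q : G.V, x ≠ q → G.reach S x q →
    ∃ e ∈ S, inc e x ∧ G.reach (S.erase e) (other e x) q := by
  classical
  intro S
  induction S using Finset.strongInduction with
  | _ S ih =>
    intro x q hxq hreach
    obtain (rfl | ⟨m, hstep, hrtg⟩) := (Relation.ReflTransGen.cases_head (reach_iff_rtg.1 hreach))
    · exact absurd rfl hxq
    obtain ⟨e, he, hor⟩ := hstep
    have hinc : inc e x := by rcases hor with ⟨h1, _⟩ | ⟨_, h2⟩; exacts [Or.inl h1, Or.inr h2]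
    have hother : other e x = m := by
      rcases other_spec hinc with ⟨h1, h2⟩ | ⟨h1, h2⟩ <;> rcases hor with ⟨g1, g2⟩ | ⟨g1, g2⟩
      · exact h2.symm.trans g2
      · exact absurd (h1.trans g2.symm) (G.no_loop e)
      · exact absurd (g1.trans h2.symm) (G.no_loop e)
      · exact h1.symm.trans g1
    set F := S.erase e with hF
    by_cases hmq : G.reach F m q
    · exact ⟨e, he, hinc, hother ▸ hmq⟩
    · have hSF : S = insert e F := (Finset.insert_erase he).symm
      have : G.reach F x q := by
        rw [hSF] at hreach
        rcases (reach_insert_iff' hinc).1 hreach with h | ⟨_, h2⟩ | ⟨_, h2⟩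
        · exact h
        · exact absurd (hother ▸ h2) hmq
        · exact h2
      obtain ⟨e', he', hinc', hr'⟩ := ih F (Finset.erase_ssubset he) x q hxq this
      refine ⟨e', Finset.mem_of_mem_erase he', hinc', ?_⟩
      exact reach_mono (Finset.erase_subset_erase e' (Finset.erase_subset e S)) hr'

end Multigraph

namespace Multigraph
variable {G : Multigraph}

/-- Inserting an edge joining the two components of a two-forest yields a spanning tree. -/
lemma forest_insert {S : Finset G.E} {e : G.E} (hS : G.IsTwoForest S)
    (hsep : ¬ G.reach S (G.fst e) (G.snd e)) : G.IsSpanningTree (insert e S) := by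
  have heS : e ∉ S := fun he => hsep (reach_of_mem he)
  have : Nonempty G.V := ⟨G.fst e⟩
  constructor
  · rw [ncomp_eq_one_iff]
    intro a b
    have ha := reach_or_of_ncomp_two hS.1 hsep a
    have hb := reach_or_of_ncomp_two hS.1 hsep b
    have hfs : G.reach (insert e S) (G.fst e) (G.snd e) :=
      reach_of_mem (Finset.mem_insert_self e S)
    have hsub := Finset.subset_insert e S
    rcases ha with ha | ha <;> rcases hb with hb | hb
    · exact reach_trans (reach_mono hsub ha) (reach_symm (reach_mono hsub hb))
    · exact reach_trans (reach_mono hsub ha)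
        (reach_trans hfs (reach_symm (reach_mono hsub hb)))
    · exact reach_trans (reach_mono hsub ha)
        (reach_trans (reach_symm hfs) (reach_symm (reach_mono hsub hb)))
    · exact reach_trans (reach_mono hsub ha) (reach_symm (reach_mono hsub hb))
  · rw [Finset.card_insert_of_notMem heS]
    have := hS.2
    omega
    
/-- Removing any edge of a spanning tree yields a two-forest separating its endpoints. -/
lemma tree_erase {T : Finset G.E} {e : G.E} (hT : G.IsSpanningTree T) (he : e ∈ T) :
    G.IsTwoForest (T.erase e) ∧ ¬ G.reach (T.erase e) (G.fst e) (G.snd e) := by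
  have : Nonempty G.V := ⟨G.fst e⟩
  set F := T.erase e with hF
  have hcard : F.card + 2 = Fintype.card G.V := by
    rw [hF, Finset.card_erase_of_mem he]
    have h1 : 1 ≤ T.card := Finset.card_pos.2 ⟨e, he⟩
    have h2 := hT.2
    omega
  have hTF : T = insert e F := (Finset.insert_erase he).symm
  have hge : 2 ≤ G.ncomp F := by
    have := card_add_ncomp_ge (G := G) F
    omega
  have hle : G.ncomp F ≤ 2 := by
    have h1 := ncomp_le_insert_add_one (G := G) F e
    rw [← hTF, hT.1] at h1
    omega
  have hnc : G.ncomp F = 2 := le_antisymm hle hge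
  refine ⟨⟨hnc, hcard⟩, fun hsep => ?_⟩
  -- if endpoints still connected, F would be connected, contradiction
  have htot : ∀ a b, G.reach F a b := by
    intro a b
    have hTab : G.reach T a b := (ncomp_eq_one_iff.1 hT.1) a b
    rw [hTF] at hTab
    rcases reach_insert_iff.1 hTab with h | ⟨h1, h2⟩ | ⟨h1, h2⟩
    · exact h
    · exact reach_trans h1 (reach_trans hsep h2)
    · exact reach_trans h1 (reach_trans (reach_symm hsep) h2)
  have : G.ncomp F = 1 := ncomp_eq_one_iff.2 htot
  omega

end Multigraph

namespace Multigraph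
variable {G : Multigraph}

/-- The key harmonicity count: summing `κ₂(o_e q | x)` over edges at `x` gives `κ`. -/
lemma harmonicity_count {x q : G.V} (hxq : x ≠ q) :
    ∑ e : G.E, (if inc e x then G.kappa2Tog (other e x) q x else 0) = G.kappa := by
  classical
  have : Nonempty G.V := ⟨x⟩
  -- the domain
  set C : G.E → Finset G.E → Prop := fun e S =>
    inc e x ∧ (G.IsTwoForest S ∧ G.reach S (other e x) q ∧ ¬ G.reach S (other e x) x) with hC
  have hstep1 : ∀ e : G.E, (if inc e x then G.kappa2Tog (other e x) q x else 0) =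
      Nat.card {S : Finset G.E // C e S} := by
    intro e
    by_cases h : inc e x
    · rw [if_pos h, kappa2Tog]
      exact Nat.card_congr (Equiv.subtypeEquivRight (fun S => by
        constructor
        · intro hh; exact ⟨h, hh⟩
        · intro hh; exact hh.2))
    · rw [if_neg h]
      haveI : IsEmpty {S : Finset G.E // C e S} := ⟨fun p => h p.2.1⟩
      exact Nat.card_of_isEmpty.symm
  rw [Finset.sum_congr rfl (fun e _ => hstep1 e)]
  -- sum of cards = card of sigma
  have hsigma : ∑ e : G.E, Nat.card {S : Finset G.E // C e S} =
      Nat.card {p : G.E × Finset G.E // C p.1 p.2} := by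
    rw [Nat.card_congr (Equiv.subtypeProdEquivSigmaSubtype C), Nat.card_eq_fintype_card,
      Fintype.card_sigma]
    exact Finset.sum_congr rfl (fun e _ => Nat.card_eq_fintype_card)
  rw [hsigma, kappa]
  -- the bijection Φ(e,S) = insert e S
  have hnotmem : ∀ (p : {p : G.E × Finset G.E // C p.1 p.2}), p.1.1 ∉ p.1.2 := by
    rintro ⟨⟨e, S⟩, hinc, _, _, hsep⟩
    intro hmem
    exact hsep (reach_symm (Relation.EqvGen.rel _ _ (step_other hmem hinc)))
  refine Nat.card_congr (Equiv.ofBijective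
    (fun p => ⟨insert p.1.1 p.1.2, ?_⟩ :
      {p : G.E × Finset G.E // C p.1 p.2} → {T : Finset G.E // G.IsSpanningTree T}) ⟨?_, ?_⟩)
  · -- insert gives a spanning tree
    obtain ⟨⟨e, S⟩, hinc, hforest, hoq, hox⟩ := p
    apply forest_insert hforest
    rcases other_spec hinc with ⟨h1, h2⟩ | ⟨h1, h2⟩
    · rw [h1, h2]; exact fun h => hox (reach_symm h)
    · rw [h1, h2]; exact hox
  · -- injective
    rintro ⟨⟨e, S⟩, hCp⟩ ⟨⟨e', S'⟩, hCp'⟩ heq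
    simp only [Subtype.mk.injEq] at heq
    obtain ⟨hinc, hforest, hoq, hox⟩ := hCp
    obtain ⟨hinc', hforest', hoq', hox'⟩ := hCp'
    have heS : e ∉ S := hnotmem ⟨⟨e, S⟩, hinc, hforest, hoq, hox⟩
    have heS' : e' ∉ S' := hnotmem ⟨⟨e', S'⟩, hinc', hforest', hoq', hox'⟩
    have hee : e = e' := by
      by_contra hee
      have he'S : e' ∈ S := by
        have : e' ∈ insert e S := heq ▸ Finset.mem_insert_self e' S'
        exact (Finset.mem_insert.1 this).resolve_left (fun h => hee h.symm)
      have hxo' : G.reach S x (other e' x) :=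
        Relation.EqvGen.rel _ _ (step_other he'S hinc')
      have hS'eq : S' = insert e (S.erase e') := by
        have h1 : S' = (insert e S).erase e' := by
          rw [heq, Finset.erase_insert heS']
        rw [h1, Finset.erase_insert_of_ne (fun h => hee h)]
      have hoq'2 := hS'eq ▸ hoq'
      have hF''sub : S.erase e' ⊆ S := Finset.erase_subset e' S
      have hF''sub' : S.erase e' ⊆ S' := hS'eq ▸ Finset.subset_insert e (S.erase e')
      rcases (reach_insert_iff' hinc).1 hoq'2 with h | ⟨h1, h2⟩ | ⟨h1, h2⟩
      · -- o' ~ q in F'' ⊆ S, combined with x ~ o' and o ~ q gives o ~ x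
        exact hox (reach_trans hoq (reach_symm (reach_trans hxo' (reach_mono hF''sub h))))
      · exact hox' (reach_mono hF''sub' h1)
      · exact hox (reach_trans hoq (reach_symm (reach_mono hF''sub h2)))
    subst hee
    have : S = S' := by
      have h1 : (insert e S).erase e = (insert e S').erase e := by rw [heq]
      rwa [Finset.erase_insert heS, Finset.erase_insert heS'] at h1
    subst this
    rfl
  · -- surjective
    rintro ⟨T, hT⟩
    have hreach : G.reach T x q := (ncomp_eq_one_iff.1 hT.1) x q
    obtain ⟨e, he, hinc, hr⟩ := exists_exit_edge T x q hxq hreach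
    obtain ⟨hforest, hsep⟩ := tree_erase hT he
    have hox : ¬ G.reach (T.erase e) (other e x) x := by
      rcases other_spec hinc with ⟨h1, h2⟩ | ⟨h1, h2⟩
      · intro h; exact hsep (by rw [h1, h2]; exact reach_symm h)
      · intro h; exact hsep (by rw [h1, h2]; exact h)
    refine ⟨⟨⟨e, T.erase e⟩, hinc, hforest, hr, hox⟩, ?_⟩
    simp only [Subtype.mk.injEq]
    exact Finset.insert_erase he

end Multigraph

namespace Multigraph
variable {G : Multigraph}

lemma card_split {α : Type} [Fintype α] (p a : α → Prop) :
    Nat.card {x // p x} = Nat.card {x // p x ∧ a x} + Nat.card {x // p x ∧ ¬ a x} := by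
  classical
  simp only [Nat.card_eq_fintype_card, Fintype.card_subtype]
  rw [← Finset.card_filter_add_card_filter_not (s := Finset.univ.filter p) a]
  rw [Finset.filter_filter, Finset.filter_filter]

lemma tog_comm (a b c : G.V) : G.kappa2Tog a b c = G.kappa2Tog b a c := by
  apply Nat.card_congr (Equiv.subtypeEquivRight _)
  intro S
  constructor
  · rintro ⟨hf, h1, h2⟩
    exact ⟨hf, reach_symm h1, fun h => h2 (reach_trans h1 h)⟩
  · rintro ⟨hf, h1, h2⟩
    exact ⟨hf, reach_symm h1, fun h => h2 (reach_trans h1 h)⟩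

lemma sep_symm (a b : G.V) : G.kappa2Sep a b = G.kappa2Sep b a := by
  apply Nat.card_congr (Equiv.subtypeEquivRight _)
  intro S
  exact ⟨fun ⟨hf, h⟩ => ⟨hf, fun hh => h (reach_symm hh)⟩,
    fun ⟨hf, h⟩ => ⟨hf, fun hh => h (reach_symm hh)⟩⟩

lemma sep_self (a : G.V) : G.kappa2Sep a a = 0 := by
  haveI : IsEmpty {S : Finset G.E // G.IsTwoForest S ∧ ¬ G.reach S a a} :=
    ⟨fun p => p.2.2 (reach_refl _ _)⟩
  exact Nat.card_of_isEmpty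

lemma tog_self (a c : G.V) : G.kappa2Tog a c a = 0 := by
  haveI : IsEmpty {S : Finset G.E // G.IsTwoForest S ∧ G.reach S a c ∧ ¬ G.reach S a a} :=
    ⟨fun p => p.2.2.2 (reach_refl _ _)⟩
  exact Nat.card_of_isEmpty

/-- Splitting a separation count according to the side of a third vertex. -/
lemma sep_split (x y c : G.V) :
    G.kappa2Sep x y = G.kappa2Tog x c y + G.kappa2Tog y c x := by
  rw [kappa2Sep, card_split (fun S => G.IsTwoForest S ∧ ¬ G.reach S x y)
    (fun S => G.reach S x c)]
  congr 1
  · apply Nat.card_congr (Equiv.subtypeEquivRight _)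
    intro S
    exact ⟨fun ⟨⟨hf, h1⟩, h2⟩ => ⟨hf, h2, h1⟩, fun ⟨hf, h2, h1⟩ => ⟨⟨hf, h1⟩, h2⟩⟩
  · apply Nat.card_congr (Equiv.subtypeEquivRight _)
    intro S
    constructor
    · rintro ⟨⟨hf, h1⟩, h2⟩
      rcases reach_or_of_ncomp_two hf.1 h1 c with hc | hc
      · exact absurd (reach_symm hc) h2
      · exact ⟨hf, reach_symm hc, fun hh => h1 (reach_symm hh)⟩
    · rintro ⟨hf, h1, h2⟩
      exact ⟨⟨hf, fun hh => h2 (reach_symm hh)⟩,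
        fun hh => h2 (reach_symm (reach_trans hh (reach_symm h1)))⟩

/-- The per-edge counting identity. -/
lemma per_edge_count (x o q : G.V) :
    G.kappa2Sep x q + G.kappa2Sep x o =
      G.kappa2Sep o q + 2 * G.kappa2Tog o q x := by
  have h1 := sep_split (G := G) x q o
  have h2 := sep_split (G := G) o q x
  have h3 := sep_split (G := G) x o q
  rw [h1, h2, h3, tog_comm q o x, tog_comm q x o, tog_comm x o q]
  ring

end Multigraph

namespace Multigraph

variable {G : Multigraph}

lemma res_symm (x y : G.V) : G.res x y = G.res y x := by
  rw [res, res, sep_symm]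

lemma res_self (x : G.V) : G.res x x = 0 := by
  rw [res, sep_self]; simp

lemma other_fst (e : G.E) : other e (G.fst e) = G.snd e := by
  rw [other, if_pos rfl]

lemma other_snd (e : G.E) : other e (G.snd e) = G.fst e := by
  rw [other, if_neg (G.no_loop e)]

lemma ite_inc {α : Sort*} (e : G.E) (x : G.V) (r s : α) :
    (if G.fst e = x ∨ G.snd e = x then r else s) = (if inc e x then r else s) := by
  by_cases h : inc e x
  · rw [if_pos h, if_pos (show G.fst e = x ∨ G.snd e = x from h)]
  · rw [if_neg h, if_neg (show ¬(G.fst e = x ∨ G.snd e = x) from h)]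

/-- Summing over the two endpoints of an edge. -/
lemma sum_inc_pair (e : G.E) (f : G.V → ℝ) :
    ∑ x : G.V, (if inc e x then f x else 0) = f (G.fst e) + f (G.snd e) := by
  classical
  have h1 : ∀ x : G.V, (if inc e x then f x else 0) =
      (if x ∈ ({G.fst e, G.snd e} : Finset G.V) then f x else 0) := by
    intro x
    refine if_congr ?_ rfl rfl
    simp [inc, Finset.mem_insert, Finset.mem_singleton, eq_comm]
  rw [Finset.sum_congr rfl (fun x _ => h1 x), Finset.sum_ite_mem,
    Finset.univ_inter, Finset.sum_pair (G.no_loop e)]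

/-- The Dirichlet energy identity. -/
lemma energy (f : G.V → ℝ) :
    ∑ e : G.E, (f (G.fst e) - f (G.snd e)) ^ 2 =
      ∑ x : G.V, f x * (∑ e : G.E, (if inc e x then f x - f (other e x) else 0)) := by
  have hswap : ∀ x, f x * (∑ e : G.E, (if inc e x then f x - f (other e x) else 0)) =
      ∑ e : G.E, (if inc e x then f x * (f x - f (other e x)) else 0) := by
    intro x
    rw [Finset.mul_sum]
    exact Finset.sum_congr rfl (fun e _ => by rw [mul_ite, mul_zero])
  rw [Finset.sum_congr rfl (fun x _ => hswap x), Finset.sum_comm]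
  refine Finset.sum_congr rfl (fun e _ => ?_)
  have hpair := sum_inc_pair e (fun v => f v * (f v - f (other e v)))
  rw [hpair, other_fst, other_snd]
  ring

section Kpos
variable (hk : (G.kappa : ℝ) ≠ 0)
include hk

lemma tog_self2 (a c : G.V) : G.kappa2Tog a c c = 0 := by
  haveI : IsEmpty {S : Finset G.E // G.IsTwoForest S ∧ G.reach S a c ∧ ¬ G.reach S a c} :=
    ⟨fun p => p.2.2.2 p.2.2.1⟩
  exact Nat.card_of_isEmpty

lemma star_identity (x q : G.V) :
    ∑ e : G.E, (if inc e x then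
        G.res x q + G.res x (other e x) - G.res (other e x) q else 0) =
      2 * (if x = q then (0:ℝ) else 1) := by
  classical
  have h1 : ∑ e : G.E, (if inc e x then
        G.res x q + G.res x (other e x) - G.res (other e x) q else 0) =
      ∑ e : G.E, (if inc e x then
        2 * (G.kappa2Tog (other e x) q x : ℝ) / (G.kappa : ℝ) else 0) := by
    refine Finset.sum_congr rfl (fun e _ => ?_)
    refine if_congr Iff.rfl ?_ rfl
    have hc := per_edge_count (G := G) x (other e x) q
    have hc' : (G.kappa2Sep x q : ℝ) + (G.kappa2Sep x (other e x) : ℝ) =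
        (G.kappa2Sep (other e x) q : ℝ) + 2 * (G.kappa2Tog (other e x) q x : ℝ) := by
      exact_mod_cast congrArg (Nat.cast : ℕ → ℝ) hc
    rw [res, res, res]
    field_simp
    linarith
  have hnat : ∑ e : G.E, (if inc e x then (G.kappa2Tog (other e x) q x : ℕ) else 0) =
      if x = q then 0 else G.kappa := by
    by_cases hxq : x = q
    · subst hxq
      rw [if_pos rfl]
      refine Finset.sum_eq_zero (fun e _ => ?_)
      rw [tog_self2 hk]
      split <;> rfl
    · rw [if_neg hxq]
      exact harmonicity_count hxq
  have hreal : ∑ e : G.E, (if inc e x then ((G.kappa2Tog (other e x) q x : ℕ) : ℝ) else 0) =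
      if x = q then (0:ℝ) else (G.kappa : ℝ) := by
    have := congrArg (Nat.cast : ℕ → ℝ) hnat
    push_cast [apply_ite (Nat.cast : ℕ → ℝ)] at this
    convert this using 1
  have h2 : ∑ e : G.E, (if inc e x then
        2 * (G.kappa2Tog (other e x) q x : ℝ) / (G.kappa : ℝ) else 0) =
      (2 / (G.kappa : ℝ)) *
        ∑ e : G.E, (if inc e x then ((G.kappa2Tog (other e x) q x : ℕ) : ℝ) else 0) := by
    rw [Finset.mul_sum]
    refine Finset.sum_congr rfl (fun e _ => ?_)
    by_cases h : inc e x
    · rw [if_pos h, if_pos h]; ring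
    · rw [if_neg h, if_neg h]; ring
  rw [h1, h2, hreal]
  by_cases hxq : x = q
  · rw [if_pos hxq, if_pos hxq]; simp
  · rw [if_neg hxq, if_neg hxq]
    field_simp

lemma mu_eq (x : G.V) :
    G.mu x = 1 - (1/2) * ∑ e : G.E, (if inc e x then G.res x (other e x) else 0) := by
  rw [mu]
  congr 2
  refine Finset.sum_congr rfl (fun e _ => ?_)
  rw [ite_inc]
  by_cases h : inc e x
  · rw [if_pos h, if_pos h]
    rcases other_spec h with ⟨h1, h2⟩ | ⟨h1, h2⟩
    · rw [h1, h2]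
    · rw [h1, h2, res_symm]
  · rw [if_neg h, if_neg h]

lemma harmonic (x q : G.V) :
    ∑ e : G.E, (if inc e x then G.res x q - G.res (other e x) q else 0) =
      2 * G.mu x - 2 * (if x = q then (1:ℝ) else 0) := by
  have hsplit : ∀ e : G.E, (if inc e x then G.res x q - G.res (other e x) q else 0) =
      (if inc e x then G.res x q + G.res x (other e x) - G.res (other e x) q else 0) -
      (if inc e x then G.res x (other e x) else 0) := by
    intro e
    by_cases h : inc e x
    · rw [if_pos h, if_pos h, if_pos h]; ring
    · rw [if_neg h, if_neg h, if_neg h]; ring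
  rw [Finset.sum_congr rfl (fun e _ => hsplit e), Finset.sum_sub_distrib,
    star_identity hk]
  have hmu := mu_eq (G := G) hk x
  have h3 : ∑ e : G.E, (if inc e x then G.res x (other e x) else 0) = 2 - 2 * G.mu x := by
    rw [hmu]; ring
  rw [h3]
  by_cases hxq : x = q
  · rw [if_pos hxq, if_pos hxq]; ring
  · rw [if_neg hxq, if_neg hxq]; ring

lemma sum_mu (q : G.V) : ∑ x : G.V, G.mu x = 1 := by
  classical
  have hzero : ∑ x : G.V,
      (∑ e : G.E, (if inc e x then G.res x q - G.res (other e x) q else 0)) = 0 := by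
    rw [Finset.sum_comm]
    refine Finset.sum_eq_zero (fun e _ => ?_)
    have hpair := sum_inc_pair e (fun v => G.res v q - G.res (other e v) q)
    rw [hpair, other_fst, other_snd]
    ring
  rw [Finset.sum_congr rfl (fun x _ => harmonic hk x q)] at hzero
  rw [Finset.sum_sub_distrib] at hzero
  have h1 : ∑ x : G.V, (2 * (if x = q then (1:ℝ) else 0)) = 2 := by
    simp [mul_ite, Finset.sum_ite_eq']
  rw [h1, ← Finset.mul_sum] at hzero
  linarith

lemma gamma_eq_c (q : G.V) :
    G.gammaAt q = (1/2) * ∑ x : G.V, G.mu x * G.res x q := by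
  rw [gammaAt, energy (fun v => G.res v q)]
  have hc : ∀ x : G.V, G.res x q *
      (∑ e : G.E, (if inc e x then G.res x q - G.res (other e x) q else 0)) =
      G.res x q * (2 * G.mu x - 2 * (if x = q then (1:ℝ) else 0)) := by
    intro x; rw [harmonic hk x q]
  rw [Finset.sum_congr rfl (fun x _ => hc x)]
  have hsum : ∑ x : G.V, G.res x q * (2 * G.mu x - 2 * (if x = q then (1:ℝ) else 0)) =
      (∑ x : G.V, 2 * (G.mu x * G.res x q)) -
      ∑ x : G.V, (if x = q then 2 * G.res x q else 0) := by
    rw [← Finset.sum_sub_distrib]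
    refine Finset.sum_congr rfl (fun x _ => ?_)
    by_cases hxq : x = q
    · rw [if_pos hxq, if_pos hxq]; ring
    · rw [if_neg hxq, if_neg hxq]; ring
  rw [hsum]
  have h2 : ∑ x : G.V, (if x = q then 2 * G.res x q else 0) = 2 * G.res q q := by
    simp [Finset.sum_ite_eq']
  rw [h2, res_self, ← Finset.mul_sum]
  ring

end Kpos

end Multigraph

namespace Multigraph
variable {G : Multigraph}

noncomputable def cfun (G : Multigraph) (v : G.V) : ℝ := ∑ y : G.V, G.mu y * G.res y v

section Kpos2
variable (hk : (G.kappa : ℝ) ≠ 0)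
include hk

lemma cfun_inner_zero (x : G.V) :
    ∑ e : G.E, (if inc e x then G.cfun x - G.cfun (other e x) else 0) = 0 := by
  classical
  have hterm : ∀ e : G.E, (if inc e x then G.cfun x - G.cfun (other e x) else 0) =
      ∑ y : G.V, (if inc e x then G.mu y * (G.res x y - G.res (other e x) y) else 0) := by
    intro e
    by_cases h : inc e x
    · rw [if_pos h]
      rw [Finset.sum_congr rfl (fun y _ => if_pos h)]
      rw [cfun, cfun, ← Finset.sum_sub_distrib]
      refine Finset.sum_congr rfl (fun y _ => ?_)
      rw [res_symm y x, res_symm y (other e x)]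
      ring
    · rw [if_neg h]
      rw [Finset.sum_congr rfl (fun y _ => if_neg h)]
      simp
  rw [Finset.sum_congr rfl (fun e _ => hterm e), Finset.sum_comm]
  have hpull : ∀ y : G.V,
      ∑ e : G.E, (if inc e x then G.mu y * (G.res x y - G.res (other e x) y) else 0) =
      G.mu y * ∑ e : G.E, (if inc e x then G.res x y - G.res (other e x) y else 0) := by
    intro y
    rw [Finset.mul_sum]
    exact Finset.sum_congr rfl (fun e _ => by rw [mul_ite, mul_zero])
  rw [Finset.sum_congr rfl (fun y _ => by rw [hpull y, harmonic hk x y])]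
  have hexp : ∀ y : G.V, G.mu y * (2 * G.mu x - 2 * (if x = y then (1:ℝ) else 0)) =
      2 * G.mu x * G.mu y - 2 * (if x = y then G.mu y else 0) := by
    intro y
    by_cases h : x = y
    · rw [if_pos h, if_pos h]; ring
    · rw [if_neg h, if_neg h]; ring
  rw [Finset.sum_congr rfl (fun y _ => hexp y), Finset.sum_sub_distrib]
  have h1 : ∑ y : G.V, 2 * G.mu x * G.mu y = 2 * G.mu x := by
    rw [← Finset.mul_sum, sum_mu hk x, mul_one]
  have h2 : ∑ y : G.V, (2 * (if x = y then G.mu y else 0)) = 2 * G.mu x := by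
    rw [← Finset.mul_sum, Finset.sum_ite_eq]
    simp
  rw [h1, h2, sub_self]

lemma cfun_const (hG : G.ncomp Finset.univ = 1) (q q' : G.V) : G.cfun q = G.cfun q' := by
  classical
  have : Nonempty G.V := ⟨q⟩
  have hzero : ∑ e : G.E, (G.cfun (G.fst e) - G.cfun (G.snd e)) ^ 2 = 0 := by
    rw [energy G.cfun]
    exact Finset.sum_eq_zero (fun x _ => by rw [cfun_inner_zero hk x, mul_zero])
  have hE : ∀ e : G.E, G.cfun (G.fst e) = G.cfun (G.snd e) := by
    intro e
    have := (Finset.sum_eq_zero_iff_of_nonneg (fun e _ => sq_nonneg _)).1 hzero e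
      (Finset.mem_univ e)
    have h2 : G.cfun (G.fst e) - G.cfun (G.snd e) = 0 := by
      exact pow_eq_zero_iff (by norm_num) |>.1 this
    linarith
  have hreach : G.reach Finset.univ q q' := (ncomp_eq_one_iff.1 hG) q q'
  clear hzero
  induction hreach with
  | rel a b hab =>
    obtain ⟨e, _, ⟨h1, h2⟩ | ⟨h1, h2⟩⟩ := hab
    · rw [← h1, ← h2]; exact hE e
    · rw [← h1, ← h2]; exact (hE e).symm
  | refl a => rfl
  | symm a b _ ih => exact ih.symm
  | trans a b c _ _ ih1 ih2 => exact ih1.trans ih2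

end Kpos2
end Multigraph

theorem gamma_base_point_independent (G : Multigraph) (hG : G.IsConnected) :
    (∀ q q' : G.V, G.gammaAt q = G.gammaAt q') ∧
    (∀ q : G.V, G.gammaAt q = (1/2) * (G.mu ⬝ᵥ G.resMatrix.mulVec G.mu)) := by
  classical
  have hG' : G.ncomp Finset.univ = 1 := hG
  by_cases hk : (G.kappa : ℝ) = 0
  · -- degenerate case: no spanning trees (cannot happen, but harmless)
    have hres : ∀ x y : G.V, G.res x y = 0 := by
      intro x y; rw [Multigraph.res, hk, div_zero]
    have hgamma : ∀ q : G.V, G.gammaAt q = 0 := by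
      intro q
      rw [Multigraph.gammaAt]
      rw [Finset.sum_congr rfl (fun e _ => by rw [hres, hres, sub_zero])]
      simp
    refine ⟨fun q q' => by rw [hgamma q, hgamma q'], fun q => ?_⟩
    rw [hgamma q]
    have hdot : G.mu ⬝ᵥ G.resMatrix.mulVec G.mu = 0 := by
      rw [dotProduct]
      refine Finset.sum_eq_zero (fun x _ => ?_)
      have : G.resMatrix.mulVec G.mu x = 0 := by
        rw [Matrix.mulVec, dotProduct]
        exact Finset.sum_eq_zero (fun y _ => by
          rw [show G.resMatrix x y = G.res x y from rfl, hres, zero_mul])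
      rw [this, mul_zero]
    rw [hdot, mul_zero]
  · have hk' : (G.kappa : ℝ) ≠ 0 := hk
    have key : ∀ q : G.V, G.gammaAt q = (1/2) * G.cfun q :=
      fun q => Multigraph.gamma_eq_c hk' q
    have hconst : ∀ q q' : G.V, G.cfun q = G.cfun q' :=
      fun q q' => Multigraph.cfun_const hk' hG q q'
    constructor
    · intro q q'
      rw [key q, key q', hconst q q']
    · intro q
      have hdot : G.mu ⬝ᵥ G.resMatrix.mulVec G.mu = ∑ x : G.V, G.mu x * G.cfun x := by
        rw [dotProduct]
        refine Finset.sum_congr rfl (fun x _ => ?_)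
        congr 1
        rw [Matrix.mulVec, dotProduct, Multigraph.cfun]
        refine Finset.sum_congr rfl (fun y _ => ?_)
        rw [Multigraph.resMatrix, Multigraph.res_symm x y]
        ring
      rw [key q, hdot]
      rw [Finset.sum_congr rfl (fun x _ => by rw [hconst x q])]
      rw [← Finset.sum_mul, Multigraph.sum_mu hk' q, one_mul]
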